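/- Let b_4 : ℕ → {0,1,2,3} be the fixed point starting with 0 of the morphism 0 ↦ 01, 1 ↦ 21, 2 ↦ 03, 3 ↦ 23, and let g_3 be the 4-uniform morphism from {0,1,2,3}* to {0,1,2}* defined by g_3(0) = 0010, g_3(1) = 1122, g_3(2) = 0200, g_3(3) = 1212. Then the infinite ternary word g_3(b_4) avoids every circular formula C_i with i ≥ 3. -/

import Mathlib

/-- `u` is a factor of the infinite word `x`. -/
def IsFactorOfInf {α : Type*} (u : List α) (x : ℕ → α) : Prop :=
  ∃ i : ℕ, u = (List.range u.length).map fun j => x (i + j)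

/-- The `i`-th fragment `A_i A_{i+1} … A_{i+t}` of the circular formula `C_t`,
as the list of variable indices (taken modulo `t`), of length `t + 1`. -/
def circFragment (t i : ℕ) : List ℕ :=
  (List.range (t + 1)).map fun j => (i + j) % t

/-- `h` is an occurrence of the circular formula `C_t` in the infinite word `x`:
`h` assigns a nonempty word to each of the `t` variables, and the `h`-image of
every fragment of `C_t` is a factor of `x`. -/
def CircOcc {α : Type*} (t : ℕ) (h : ℕ → List α) (x : ℕ → α) : Prop :=
  (∀ v < t, h v ≠ []) ∧ ∀ i < t, IsFactorOfInf ((circFragment t i).flatMap h) x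

/-- The morphism `0 ↦ 01, 1 ↦ 21, 2 ↦ 03, 3 ↦ 23` whose fixed point
starting with `0` is `b₄`. -/
def mb4 : Fin 4 → List (Fin 4) := ![[0, 1], [2, 1], [0, 3], [2, 3]]

/-- The 4-uniform morphism `g₃ : {0,1,2,3}* → {0,1,2}*`. -/
def g3 : Fin 4 → List (Fin 3) :=
  ![[0, 0, 1, 0], [1, 1, 2, 2], [0, 2, 0, 0], [1, 2, 1, 2]]


/-!
An occurrence of `C_t` spells out, as `h(A₀ ⋯ A_{t-1})^ω`, a periodic word `Y` of period
`p ≥ t` all of whose factors of length `p + 1` are factors of `x = g₃(b₄)`: a *cyclic factor* of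
`x` of period `p`. For `p ≤ 9` this is refuted by a finite inspection, since every factor of `x` of
length at most `10` is a factor of `g₃(0 ? 2 ? 0 ? 2 ?)` with `? ∈ {1, 3}`. For `p ≥ 10` every
window of `Y` contains the marker `01[12]`, which occurs in `x` only at positions `3 mod 8`; so
all windows are synchronised with the blocks of `g₃`, `8 ∣ p`, and decoding the blocks yields a
cyclic factor of `b₄` of period `p / 4`. Finally a cyclic factor of `b₄` has even period `q` (the
letters of `b₄` alternate in parity) and decodes the same way into one of period `q / 2`, so by
descent there is none.
-/

open Function

section CircularFormula

variable {α : Type*}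

def HasCyclicFactor (x : ℕ → α) (p : ℕ) : Prop :=
  ∃ Y : ℕ → α, Periodic Y p ∧ ∀ r, ∃ n, ∀ j ≤ p, Y (r + j) = x (n + j)

lemma isFactorOfInf_iff {u : List α} {x : ℕ → α} :
    IsFactorOfInf u x ↔ ∃ n, ∀ j (hj : j < u.length), u[j] = x (n + j) := by
  refine exists_congr fun n => ⟨fun h j hj => ?_, fun h => List.ext_getElem (by simp) ?_⟩
  · simp [List.getElem_of_eq h hj]
  · intro j hj _
    simp [h j hj]

/-- The image under `h` of the first `m` letters of the infinite word `(A₀ ⋯ A_{t-1})^ω`. -/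
def circImage (h : ℕ → List α) (t m : ℕ) : List α :=
  (List.range m).flatMap fun k => h (k % t)

variable (h : ℕ → List α) (t : ℕ)

lemma circImage_add (a b : ℕ) :
    circImage h t (a + b) =
      circImage h t a ++ (List.range b).flatMap fun j => h ((a + j) % t) := by
  simp only [circImage, List.range_add, List.flatMap_append, List.flatMap_map]

lemma circImage_period_add (m : ℕ) :
    circImage h t (t + m) = circImage h t t ++ circImage h t m := by
  simp only [circImage_add, Nat.add_mod_left]
  rfl

lemma circImage_add_fragment (i : ℕ) :
    circImage h t (i + (t + 1)) = circImage h t i ++ (circFragment t i).flatMap h := by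
  rw [circImage_add, circFragment, List.flatMap_map]

lemma circImage_prefix {m m' : ℕ} (hm : m ≤ m') : circImage h t m <+: circImage h t m' := by
  obtain ⟨k, rfl⟩ := Nat.exists_eq_add_of_le hm
  rw [circImage_add]
  exact List.prefix_append _ _

lemma circFragment_mod (i : ℕ) : circFragment t (i % t) = circFragment t i := by
  simp [circFragment, Nat.mod_add_mod]

variable {h t}

lemma strictMono_length_circImage (hne : ∀ v < t, h v ≠ []) (ht : 0 < t) :
    StrictMono fun m => (circImage h t m).length := by
  refine strictMono_nat_of_lt_succ fun m => ?_
  have := List.length_pos_iff.mpr (hne _ (Nat.mod_lt m ht))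
  simp [circImage_add h t m 1]
  omega

lemma getElem_circImage (ht : 0 < t) (d : α) (m n : ℕ) (hn : n < (circImage h t m).length) :
    (circImage h t m)[n] = (circImage h t t).getD (n % (circImage h t t).length) d := by
  induction m using Nat.strong_induction_on generalizing n with
  | _ m ih =>
  set p := (circImage h t t).length
  rcases le_or_gt m t with hm | hm
  · have hpre := circImage_prefix h t hm
    have hlt : n < p := hn.trans_le hpre.length_le
    rw [Nat.mod_eq_of_lt hlt, List.getD_eq_getElem _ _ hlt, hpre.getElem]
  · obtain ⟨k, rfl⟩ : ∃ k, m = t + k := ⟨m - t, by omega⟩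
    simp only [circImage_period_add h t k] at hn ⊢
    rcases lt_or_ge n p with hnp | hnp
    · rw [List.getElem_append_left hnp, Nat.mod_eq_of_lt hnp, List.getD_eq_getElem]
    · obtain ⟨n, rfl⟩ := Nat.exists_eq_add_of_le hnp
      rw [List.getElem_append_right hnp, ih k (by omega)]
      simp [p]

theorem CircOcc.hasCyclicFactor {x : ℕ → α} (ht : 0 < t) (hocc : CircOcc t h x) :
    ∃ p, t ≤ p ∧ HasCyclicFactor x p := by
  obtain ⟨hne, hfrag⟩ := hocc
  have hs := strictMono_length_circImage hne ht
  set p := (circImage h t t).length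
  refine ⟨p, hs.id_le t, fun n => (circImage h t t).getD (n % p) (x 0), fun n => by simp,
    fun r => ?_⟩
  -- the window at `r` lies in the image of the fragment starting at the variable read at `r`
  obtain ⟨i, hir, hri⟩ := hs.exists_between_of_tendsto_atTop hs.tendsto_atTop
    (x := r + 1) (by simp [circImage])
  obtain ⟨n, hn⟩ := isFactorOfInf_iff.mp (circFragment_mod t i ▸ hfrag (i % t) (Nat.mod_lt _ ht))
  have hlen : (circImage h t (i + (t + 1))).length = p + (circImage h t (i + 1)).length := by
    simp [p, show i + (t + 1) = t + (i + 1) by omega, circImage_period_add]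
  refine ⟨n + (r - (circImage h t i).length), fun j hj => ?_⟩
  have hrj : r + j < (circImage h t (i + (t + 1))).length := by omega
  calc (circImage h t t).getD ((r + j) % p) (x 0)
      = (circImage h t (i + (t + 1)))[r + j] := (getElem_circImage ht _ _ _ hrj).symm
    _ = ((circFragment t i).flatMap h)[r + j - (circImage h t i).length]'(by
          simp only [circImage_add_fragment, List.length_append] at hrj; omega) := by
        simp only [List.getElem_of_eq (circImage_add_fragment h t i) hrj]
        exact List.getElem_append_right (by omega)
    _ = x (n + (r - (circImage h t i).length) + j) := by rw [hn]; congr 1; omega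

lemma HasCyclicFactor.modEq_of_sync {x : ℕ → α} {p L d : ℕ}
    (hsync : ∀ n n', (∀ k < L, x (n + k) = x (n' + k)) → n ≡ n' [MOD d]) (hL : L ≤ p)
    {Y : ℕ → α} (hY : Periodic Y p) (hocc : ∀ r, ∃ n, ∀ j ≤ p, Y (r + j) = x (n + j)) :
    d ∣ p ∧ ∃ n₀, ∀ r n, (∀ j ≤ p, Y (r + j) = x (n + j)) → n ≡ n₀ + r [MOD d] := by
  obtain ⟨n₀, h₀⟩ := hocc 0
  simp only [zero_add] at h₀
  have hphase : ∀ r n, (∀ j ≤ p, Y (r + j) = x (n + j)) → n ≡ n₀ + r [MOD d] := by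
    intro r
    induction r with
    | zero =>
      intro n hn
      exact hsync n n₀ fun k hk => by rw [← hn k (by omega), zero_add, h₀ k (by omega)]
    | succ r ih =>
      -- the windows at `r` and `r + 1` overlap in a factor of length `p ≥ L`
      intro n hn
      obtain ⟨m, hm⟩ := hocc r
      have hmn := hsync n (m + 1) fun k hk => by
        rw [← hn k (by omega), add_assoc m, ← hm (1 + k) (by omega), add_assoc, add_comm 1 k]
      exact hmn.trans ((ih m hm).add_right 1)
  refine ⟨?_, n₀, hphase⟩
  have := hphase p n₀ fun j hj => by rw [add_comm p, hY, h₀ j hj]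
  exact Nat.modEq_zero_iff_dvd.mp (Nat.ModEq.add_left_cancel' n₀ this.symm)

end CircularFormula

def g3Image (w : ℕ → Fin 4) (n : ℕ) : Fin 3 := (g3 (w (n / 4))).getD (n % 4) 0

/-- The letters of `b4` at even positions are forced; `c k` is the top bit of `b4 (2 k + 1)`. -/
def fillB4 (c : ℕ → Bool) (a : ℕ) : Fin 4 :=
  if a % 2 = 1 then cond (c (a / 2)) 3 1 else if a % 4 = 0 then 0 else 2

/-- The first `24` letters of `g₃(fillB4 c)` depend only on the bits `c 0, c 1, c 2`. -/
def g3Template (c : Fin 3 → Bool) : ℕ → Fin 3 := g3Image (fillB4 fun i => c (Fin.ofNat 3 i))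

/-- `u` is recovered from the second and fourth letters of `g₃(u)`. -/
def g3Dec (a b : Fin 3) : Fin 4 :=
  ⟨if a.val < 2 then a.val else 2 + b.val / 2, by split_ifs <;> omega⟩

lemma g3Dec_g3 : ∀ u : Fin 4, g3Dec ((g3 u).getD 1 0) ((g3 u).getD 3 0) = u := by decide

lemma g3_injective_getD_one : ∀ u v : Fin 4,
    (g3 u).getD 1 0 = (g3 v).getD 1 0 → u.val % 2 = v.val % 2 → u = v := by decide

lemma g3Template_marker_iff : ∀ φ < 16, ∀ c : Fin 3 → Bool,
    (g3Template c φ = 0 ∧ g3Template c (φ + 1) = 1 ∧ g3Template c (φ + 2) ≠ 0) ↔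
      φ % 8 = 3 := by
  decide

lemma g3Template_period_three : ∀ f : Fin 3 → Fin 3, ∃ r < 3, ∀ φ < 16, ∀ c : Fin 3 → Bool,
    ∃ j ≤ 3, f (Fin.ofNat 3 (r + j)) ≠ g3Template c (φ + j) := by
  decide

lemma g3Image_fillB4_zero_pattern : ∀ p ∈ Finset.Icc 4 9, ∀ φ < 16, ∃ r < p, ∀ φ' < 16, ∃ j ≤ p,
    ¬ (g3Image (fillB4 fun _ => false) (φ + (r + j) % p) = 0 ↔
      g3Image (fillB4 fun _ => false) (φ' + j) = 0) := by
  decide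

lemma g3Image_four_mul_add (w : ℕ → Fin 4) {a i : ℕ} (hi : i < 4) :
    g3Image w (4 * a + i) = (g3 (w a)).getD i 0 := by
  simp only [g3Image, show (4 * a + i) / 4 = a by omega, show (4 * a + i) % 4 = i by omega]

section Template

variable (c : ℕ → Bool)

lemma g3Image_fillB4_sixteen_mul_add (a m : ℕ) :
    g3Image (fillB4 c) (16 * a + m) = g3Image (fillB4 fun i => c (2 * a + i)) m := by
  simp only [g3Image, fillB4, show (16 * a + m) / 4 % 2 = m / 4 % 2 by omega,
    show (16 * a + m) / 4 % 4 = m / 4 % 4 by omega,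
    show (16 * a + m) / 4 / 2 = 2 * a + m / 4 / 2 by omega, show (16 * a + m) % 4 = m % 4 by omega]

lemma g3Image_fillB4_add (n : ℕ) {k : ℕ} (hk : n % 16 + k < 24) :
    g3Image (fillB4 c) (n + k) = g3Template (fun j => c (2 * (n / 16) + j)) (n % 16 + k) := by
  rw [show n + k = 16 * (n / 16) + (n % 16 + k) by omega, g3Image_fillB4_sixteen_mul_add]
  simp only [g3Template, g3Image, fillB4, Nat.div_div_eq_div_mul, Fin.val_ofNat,
    Nat.mod_eq_of_lt (show (n % 16 + k) / (4 * 2) < 3 by omega)]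

lemma g3Image_fillB4_eq_zero_iff (c' : ℕ → Bool) (n : ℕ) :
    g3Image (fillB4 c) n = 0 ↔ g3Image (fillB4 c') n = 0 := by
  have hodd : ∀ i < 4, (g3 1).getD i 0 ≠ 0 ∧ (g3 3).getD i 0 ≠ 0 := by decide
  obtain ⟨h1, h3⟩ := hodd _ (Nat.mod_lt n four_pos)
  simp only [g3Image, fillB4]
  split_ifs
  · cases c (n / 4 / 2) <;> cases c' (n / 4 / 2) <;> simp only [cond_true, cond_false, h1, h3]
  · rfl
  · rfl

lemma g3Image_fillB4_add_eq_zero_iff (n k : ℕ) :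
    g3Image (fillB4 c) (n + k) = 0 ↔ g3Image (fillB4 fun _ => false) (n % 16 + k) = 0 := by
  rw [g3Image_fillB4_eq_zero_iff c (fun _ => false),
    show n + k = 16 * (n / 16) + (n % 16 + k) by omega, g3Image_fillB4_sixteen_mul_add]

lemma g3Image_fillB4_marker_iff (n : ℕ) :
    (g3Image (fillB4 c) n = 0 ∧ g3Image (fillB4 c) (n + 1) = 1 ∧
      g3Image (fillB4 c) (n + 2) ≠ 0) ↔ n % 8 = 3 := by
  have h₀ := g3Image_fillB4_add c n (k := 0) (by omega)
  rw [add_zero, add_zero] at h₀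
  rw [h₀, g3Image_fillB4_add c n (by omega), g3Image_fillB4_add c n (by omega)]
  exact (g3Template_marker_iff _ (Nat.mod_lt n (by norm_num)) _).trans (by omega)

/-- Every factor of length `10` contains the marker `01[12]`. -/
lemma g3Image_fillB4_modEq_of_factor {n n' : ℕ}
    (h : ∀ k < 10, g3Image (fillB4 c) (n + k) = g3Image (fillB4 c) (n' + k)) :
    n ≡ n' [MOD 8] := by
  set k := (11 - n % 8) % 8
  have hmark := (g3Image_fillB4_marker_iff c (n + k)).mpr (by omega)
  simp only [add_assoc, h k (by omega), h (k + 1) (by omega), h (k + 2) (by omega)] at hmark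
  rw [← add_assoc, ← add_assoc, g3Image_fillB4_marker_iff] at hmark
  unfold Nat.ModEq
  omega

theorem not_hasCyclicFactor_g3Image_fillB4 {p : ℕ} (hp3 : 3 ≤ p) (hp9 : p ≤ 9) :
    ¬ HasCyclicFactor (g3Image (fillB4 c)) p := by
  rintro ⟨Y, hY, hocc⟩
  rcases hp3.eq_or_lt with rfl | hp4
  · obtain ⟨r, hr, hmis⟩ := g3Template_period_three fun i => Y i
    obtain ⟨n, hn⟩ := hocc r
    obtain ⟨j, hj, hne⟩ :=
      hmis (n % 16) (Nat.mod_lt _ (by norm_num)) fun i => c (2 * (n / 16) + i)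
    apply hne
    rw [← g3Image_fillB4_add c n (by omega), ← hn j hj, Fin.val_ofNat, hY.map_mod_nat]
  · -- zeros do not depend on `c`, so those of `Y` are read off its window at `0`
    obtain ⟨n₀, h₀⟩ := hocc 0
    obtain ⟨r, hr, hmis⟩ :=
      g3Image_fillB4_zero_pattern p (by simp; omega) (n₀ % 16) (Nat.mod_lt _ (by norm_num))
    obtain ⟨n, hn⟩ := hocc r
    obtain ⟨j, hj, hne⟩ := hmis (n % 16) (Nat.mod_lt _ (by norm_num))
    apply hne
    rw [← g3Image_fillB4_add_eq_zero_iff, ← g3Image_fillB4_add_eq_zero_iff, ← hn j hj,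
      ← h₀ _ (Nat.mod_lt _ (by omega)).le, zero_add, hY.map_mod_nat]

end Template

section FixedPoint

variable {b4 : ℕ → Fin 4} (hfix : ∀ n, [b4 (2 * n), b4 (2 * n + 1)] = mb4 (b4 n))
include hfix

lemma val_b4_pair (n : ℕ) : (b4 (2 * n)).val = 2 * ((b4 n).val % 2) ∧
    (b4 (2 * n + 1)).val = 2 * ((b4 n).val / 2) + 1 := by
  have hmb4 : ∀ a b u : Fin 4, [a, b] = mb4 u →
      a.val = 2 * (u.val % 2) ∧ b.val = 2 * (u.val / 2) + 1 := by
    decide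
  exact hmb4 _ _ _ (hfix n)

lemma val_b4_mod_two (n : ℕ) : (b4 n).val % 2 = n % 2 := by
  obtain ⟨k, rfl | rfl⟩ := Nat.even_or_odd' n <;> have := val_b4_pair hfix k <;> omega

lemma val_b4_two_mul (n : ℕ) : (b4 (2 * n)).val = 2 * (n % 2) := by
  rw [(val_b4_pair hfix n).1, val_b4_mod_two hfix]

lemma b4_eq_fillB4 : b4 = fillB4 fun k => decide (b4 (2 * k + 1) = 3) := by
  funext a
  obtain ⟨k, rfl | rfl⟩ := Nat.even_or_odd' a
  · have := val_b4_two_mul hfix k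
    simp only [fillB4]
    split_ifs <;> ext <;> simp only [this] <;> omega
  · have hodd : b4 (2 * k + 1) = 1 ∨ b4 (2 * k + 1) = 3 := by
      have := (val_b4_pair hfix k).2
      simp only [Fin.ext_iff]
      omega
    rcases hodd with h | h <;>
      simp [fillB4, h, show (2 * k + 1) % 2 = 1 by omega, show (2 * k + 1) / 2 = k by omega]

lemma HasCyclicFactor.exists_parity_aligned {q : ℕ} (hq : 0 < q) (h : HasCyclicFactor b4 q) :
    2 ∣ q ∧ ∃ Q : ℕ → Fin 4, Periodic Q q ∧
      ∀ r, ∃ n, n % 2 = r % 2 ∧ ∀ j ≤ q, Q (r + j) = b4 (n + j) := by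
  obtain ⟨C, hC, hocc⟩ := h
  have hstep : ∀ r, (C (r + 1)).val % 2 = ((C r).val + 1) % 2 := by
    intro r
    obtain ⟨n, hn⟩ := hocc r
    have h0 := hn 0 (Nat.zero_le q)
    rw [add_zero, add_zero] at h0
    rw [hn 1 hq, h0]
    have := val_b4_mod_two hfix n
    have := val_b4_mod_two hfix (n + 1)
    omega
  have halt : ∀ r, (C r).val % 2 = ((C 0).val + r) % 2 := by
    intro r
    induction r with
    | zero => simp
    | succ r ih => rw [hstep]; omega
  have hq2 : 2 ∣ q := by
    have := halt q
    rw [← zero_add q, hC, zero_add] at this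
    omega
  refine ⟨hq2, fun n => C (n + (C 0).val % 2), fun n => by simp only [add_right_comm n q, hC _],
    fun r => ?_⟩
  obtain ⟨n, hn⟩ := hocc (r + (C 0).val % 2)
  refine ⟨n, ?_, fun j hj => by simp only [add_right_comm r j, hn j hj]⟩
  have := hn 0 (Nat.zero_le q)
  rw [add_zero, add_zero] at this
  rw [← val_b4_mod_two hfix, ← this, halt]
  omega

lemma HasCyclicFactor.desubst_mb4 {q : ℕ} (hq : 0 < q) (h : HasCyclicFactor b4 q) :
    2 ∣ q ∧ HasCyclicFactor b4 (q / 2) := by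
  obtain ⟨hq2, Q, hQ, hocc⟩ := h.exists_parity_aligned hfix hq
  refine ⟨hq2, ?_⟩
  obtain ⟨m, rfl⟩ := hq2
  rw [Nat.mul_div_cancel_left m two_pos]
  -- `mb4 u = [2 (u mod 2), 2 (u div 2) + 1]`, so `u` is read off from its image
  let C : ℕ → Fin 4 := fun k => ⟨(Q (2 * k)).val / 2 + 2 * ((Q (2 * k + 1)).val / 2), by omega⟩
  refine ⟨C, fun k => ?_, fun r => ?_⟩
  · simp only [C, mul_add, add_right_comm _ (2 * m) 1, hQ _]
  obtain ⟨n, hnpar, hn⟩ := hocc (2 * r + 1)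
  obtain ⟨w, rfl⟩ : ∃ w, n = 2 * w + 1 := ⟨n / 2, by omega⟩
  refine ⟨w, fun k hk => Fin.ext ?_⟩
  have hsnd : Q (2 * (r + k) + 1) = b4 (2 * (w + k) + 1) := by
    rw [show 2 * (r + k) + 1 = 2 * r + 1 + 2 * k by ring, hn (2 * k) (by omega)]
    ring_nf
  have hb4 := val_b4_pair hfix (w + k)
  show (Q (2 * (r + k))).val / 2 + 2 * ((Q (2 * (r + k) + 1)).val / 2) = (b4 (w + k)).val
  rw [hsnd]
  rcases k with _ | k
  · -- the first letter of the pair at `r` lies outside the window; since the even-indexed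
    -- letters of `b4` alternate between `0` and `2`, it is the opposite of the next one
    simp only [add_zero] at hb4 ⊢
    obtain ⟨e, hepar, he⟩ := hocc (2 * r)
    obtain ⟨e, rfl⟩ : ∃ e', e = 2 * e' := ⟨e / 2, by omega⟩
    have h₀ := he 0 (by omega)
    have h₂ := he 2 (by omega)
    rw [add_zero, add_zero] at h₀
    have h₁ := hn 1 (by omega)
    rw [show 2 * r + 1 + 1 = 2 * r + 2 by ring, show 2 * w + 1 + 1 = 2 * (w + 1) by ring] at h₁
    rw [h₁, show 2 * e + 2 = 2 * (e + 1) by ring] at h₂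
    have := congrArg Fin.val h₂
    rw [val_b4_two_mul hfix, val_b4_two_mul hfix] at this
    rw [h₀, val_b4_two_mul hfix]
    have := val_b4_mod_two hfix w
    omega
  · have hfst : Q (2 * (r + (k + 1))) = b4 (2 * (w + (k + 1))) := by
      rw [show 2 * (r + (k + 1)) = 2 * r + 1 + (2 * k + 1) by ring, hn (2 * k + 1) (by omega)]
      ring_nf
    rw [hfst]
    omega

theorem not_hasCyclicFactor_b4 {q : ℕ} (hq : 0 < q) : ¬ HasCyclicFactor b4 q := by
  induction q using Nat.strong_induction_on with
  | _ q ih =>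
  intro h
  obtain ⟨h2, hhalf⟩ := h.desubst_mb4 hfix hq
  exact ih (q / 2) (by omega) (by omega) hhalf

lemma HasCyclicFactor.desubst_g3 {p : ℕ} (hp : 10 ≤ p) (h : HasCyclicFactor (g3Image b4) p) :
    HasCyclicFactor b4 (p / 4) := by
  obtain ⟨Y, hY, hocc⟩ := h
  have hsync : ∀ n n', (∀ k < 10, g3Image b4 (n + k) = g3Image b4 (n' + k)) →
      n ≡ n' [MOD 8] := by
    rw [b4_eq_fillB4 hfix]
    exact fun n n' => g3Image_fillB4_modEq_of_factor _
  obtain ⟨h8, n₀, hphase⟩ := HasCyclicFactor.modEq_of_sync hsync hp hY hocc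
  obtain ⟨q, rfl⟩ : ∃ q, p = 4 * q := ⟨p / 4, by omega⟩
  rw [Nat.mul_div_cancel_left q four_pos]
  -- shifted by `r₀`, the windows at multiples of `4` start at the second letter of a block, so
  -- their last letter is the second letter of a block too, which with the parity determines it
  set r₀ := (5 - n₀ % 4) % 4
  let C : ℕ → Fin 4 := fun k => g3Dec (Y (r₀ + 4 * k)) (Y (r₀ + 4 * k + 2))
  have hC : Periodic C q := fun k => by
    simp only [C, mul_add, ← add_assoc, hY _, add_right_comm _ (4 * q) 2]
  refine ⟨C, hC, fun m => ?_⟩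
  obtain ⟨n, hn⟩ := hocc (r₀ + 4 * m)
  have hn₁ := hphase _ n hn
  unfold Nat.ModEq at hn₁
  obtain ⟨a, rfl⟩ : ∃ a, n = 4 * a + 1 := ⟨n / 4, by omega⟩
  have hletter : ∀ k i, i < 3 → 4 * k + i ≤ 4 * q →
      Y (r₀ + 4 * m + (4 * k + i)) = (g3 (b4 (a + k))).getD (i + 1) 0 := by
    intro k i hi hk
    rw [hn _ hk, ← g3Image_four_mul_add b4 (by omega)]
    ring_nf
  have hdec : ∀ k < q, C (m + k) = b4 (a + k) := by
    intro k hk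
    simp only [C]
    rw [← g3Dec_g3 (b4 (a + k)), ← hletter k 0 (by omega) (by omega),
      ← hletter k 2 (by omega) (by omega)]
    ring_nf
  refine ⟨a, fun k hk => ?_⟩
  rcases hk.lt_or_eq with hk | hk
  · exact hdec k hk
  have h₀ := hletter 0 0 (by omega) (by omega)
  simp only [add_zero, mul_zero] at h₀
  rw [hk, hC, ← add_zero m, hdec 0 (by omega), add_zero]
  refine g3_injective_getD_one _ _ ?_ (by rw [val_b4_mod_two hfix, val_b4_mod_two hfix]; omega)
  rw [← h₀, ← hY, hn _ le_rfl, show 4 * a + 1 + 4 * q = 4 * (a + q) + 1 by ring,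
    g3Image_four_mul_add b4 (by omega)]

end FixedPoint

theorem stmt_7_general (b4 : ℕ → Fin 4)
    (hfix : ∀ n, [b4 (2 * n), b4 (2 * n + 1)] = mb4 (b4 n)) :
    ∀ i, 3 ≤ i →
      ¬ ∃ h : ℕ → List (Fin 3),
          CircOcc i h (fun n => (g3 (b4 (n / 4))).getD (n % 4) 0) := by
  rintro t ht ⟨h, hocc⟩
  obtain ⟨p, htp, hp⟩ := CircOcc.hasCyclicFactor (x := g3Image b4) (by omega) hocc
  rcases lt_or_ge p 10 with hp9 | hp10
  · rw [b4_eq_fillB4 hfix] at hp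
    exact not_hasCyclicFactor_g3Image_fillB4 _ (by omega) (by omega) hp
  · exact not_hasCyclicFactor_b4 hfix (by omega) (hp.desubst_g3 hfix hp10)

/-- If `b₄` is the fixed point starting with `0` of the morphism
`0 ↦ 01, 1 ↦ 21, 2 ↦ 03, 3 ↦ 23`, then the infinite ternary word `g₃(b₄)`
avoids every circular formula `C_i` with `i ≥ 3`. -/
theorem stmt_7 (b4 : ℕ → Fin 4) (hb0 : b4 0 = 0)
    (hfix : ∀ n, [b4 (2 * n), b4 (2 * n + 1)] = mb4 (b4 n)) :
    ∀ i, 3 ≤ i →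
      ¬ ∃ h : ℕ → List (Fin 3),
          CircOcc i h (fun n => (g3 (b4 (n / 4))).getD (n % 4) 0) :=
  stmt_7_general b4 hfix
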